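/- For every real inner product space and every family of vectors (V_w), and at every grade n: ⟨E∘½(id−S), E∘½(id+S)⟩ = 0, where ½(id−S) and ½(id+S) are the sinhlog and coshlog endomorphisms, E is the expectation endomorphism, and the inner product is taken over the words of length n. -/

import Mathlib

open Finsupp

/-- Words over the alphabet `A = {0,1,…,d}`. -/
abbrev Word (d : ℕ) : Type := List (Fin (d+1))

/-- The free real vector space with basis the set of all words. -/
abbrev KA (d : ℕ) : Type := Word d →₀ ℝ

/-- Shuffle product of two words, as an element of `KA d`. -/
noncomputable def shuffleWord (d : ℕ) : Word d → Word d → KA d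
  | [], v => Finsupp.single v 1
  | a :: u, [] => Finsupp.single (a :: u) 1
  | a :: u, b :: v =>
      Finsupp.mapDomain (List.cons a) (shuffleWord d u (b :: v)) +
      Finsupp.mapDomain (List.cons b) (shuffleWord d (a :: u) v)
  termination_by u v => u.length + v.length

/-- Bilinear extension of the shuffle product to `KA d`. -/
noncomputable def sh (d : ℕ) (x y : KA d) : KA d :=
  x.sum fun u cu => y.sum fun v cv => (cu * cv) • shuffleWord d u v

/-- Admissible words: concatenations of blocks each of which is the single
letter `0` or a pair `aa` with `a ≠ 0`. -/
inductive Admissible (d : ℕ) : Word d → Prop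
  | nil : Admissible d []
  | zero {w : Word d} : Admissible d w → Admissible d (0 :: w)
  | pair {w : Word d} (a : Fin (d+1)) : a ≠ 0 → Admissible d w →
      Admissible d (a :: a :: w)

/-- Number of `0` letters. -/
def zc (d : ℕ) (w : Word d) : ℕ := w.count 0

/-- Half the number of nonzero letters. -/
def dc (d : ℕ) (w : Word d) : ℕ := (w.length - w.count 0) / 2

def nc (d : ℕ) (w : Word d) : ℕ := zc d w + dc d w

open Classical in
/-- The expectation map on words. -/
noncomputable def Ebar (d : ℕ) (t : ℝ) (w : Word d) : ℝ :=
  if Admissible d w then t ^ nc d w / (2 ^ dc d w * Nat.factorial (nc d w)) else 0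

/-- Linear extension of the expectation map to `KA d`. -/
noncomputable def EbarL (d : ℕ) (t : ℝ) (x : KA d) : ℝ :=
  x.sum fun w c => c * Ebar d t w

/-- The linear endomorphism of `KA d` determined by values on basis words. -/
noncomputable def wordLift (d : ℕ) (f : Word d → KA d) : KA d →ₗ[ℝ] KA d :=
  Finsupp.lsum ℝ fun w => LinearMap.toSpanSingleton ℝ (KA d) (f w)

/-- The identity endomorphism `id`. -/
noncomputable def idE (d : ℕ) : KA d →ₗ[ℝ] KA d := LinearMap.id

/-- The reversal endomorphism `|S|`. -/
noncomputable def revE (d : ℕ) : KA d →ₗ[ℝ] KA d :=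
  wordLift d fun w => Finsupp.single w.reverse 1

/-- The antipode `S`. -/
noncomputable def Sa (d : ℕ) : KA d →ₗ[ℝ] KA d :=
  wordLift d fun w => Finsupp.single w.reverse ((-1 : ℝ) ^ w.length)

/-- The convolution unit `ν`. -/
noncomputable def nuE (d : ℕ) : KA d →ₗ[ℝ] KA d :=
  wordLift d fun w => if w = [] then Finsupp.single ([] : Word d) 1 else 0

/-- The expectation endomorphism `E`. -/
noncomputable def EE (d : ℕ) (t : ℝ) : KA d →ₗ[ℝ] KA d :=
  wordLift d fun w => Finsupp.single ([] : Word d) (Ebar d t w)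

/-- The convolution product `X ⋆ Y`. -/
noncomputable def conv (d : ℕ) (X Y : KA d →ₗ[ℝ] KA d) : KA d →ₗ[ℝ] KA d :=
  wordLift d fun w => ∑ k ∈ Finset.range (w.length + 1),
    sh d (X (Finsupp.single (w.take k) 1)) (Y (Finsupp.single (w.drop k) 1))

/-- Convolution powers, `X^{⋆0} = ν`. -/
noncomputable def convPow (d : ℕ) (X : KA d →ₗ[ℝ] KA d) : ℕ → (KA d →ₗ[ℝ] KA d)
  | 0 => nuE d
  | k + 1 => conv d X (convPow d X k)

/-- The inner product `⟨X,Y⟩` of endomorphisms, taken over the words of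
length `n`, relative to the family of vectors `Vf`. -/
noncomputable def ip (d : ℕ) (t : ℝ) {H : Type*} [NormedAddCommGroup H]
    [InnerProductSpace ℝ H] (Vf : Word d → H) (n : ℕ)
    (X Y : KA d →ₗ[ℝ] KA d) : ℝ :=
  ∑ u : Fin n → Fin (d+1), ∑ v : Fin n → Fin (d+1),
    EbarL d t (sh d (X (Finsupp.single (List.ofFn u) 1))
                    (Y (Finsupp.single (List.ofFn v) 1))) *
      (inner ℝ (Vf (List.ofFn u)) (Vf (List.ofFn v)) : ℝ)

/-- Positive semidefiniteness of the expectation Gram matrix at grade `n`: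
indexed by the words of length `n` together with the empty word. -/
def gramPSD (d n : ℕ) (t : ℝ) : Prop :=
  ∀ c : Option (Fin n → Fin (d+1)) → ℝ,
    0 ≤ ∑ x : Option (Fin n → Fin (d+1)), ∑ y : Option (Fin n → Fin (d+1)),
      c x * c y *
        EbarL d t (shuffleWord d (x.elim ([] : Word d) List.ofFn)
                                 (y.elim ([] : Word d) List.ofFn))

/-!
The expectation is invariant under reversal of words, since reversing an admissible word gives
an admissible word with the same letter counts. Hence on a word `w` of length `n` the two
endomorphisms `E ∘ ½(id ∓ S)` both act as `½(1 ∓ (-1)^n) · Ē(w) · 𝟏`, and for every `n` one of the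
two scalars `½(1 ∓ (-1)^n)` vanishes. Shuffling multiples of the empty word is multiplication of
the coefficients, so every summand of the inner product is zero.
-/

section Expectation

variable {d : ℕ} {t : ℝ}

theorem Admissible.append_zero {w : Word d} (h : Admissible d w) :
    Admissible d (w ++ [0]) := by
  induction h with
  | nil => exact .zero .nil
  | zero _ ih => exact .zero ih
  | pair b hb _ ih => exact .pair b hb ih

theorem Admissible.append_pair {w : Word d} {a : Fin (d+1)} (ha : a ≠ 0)
    (h : Admissible d w) : Admissible d (w ++ [a, a]) := by
  induction h with
  | nil => exact .pair a ha .nil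
  | zero _ ih => exact .zero ih
  | pair b hb _ ih => exact .pair b hb ih

theorem Admissible.reverse {w : Word d} (h : Admissible d w) : Admissible d w.reverse := by
  induction h with
  | nil => exact .nil
  | zero _ ih => simpa only [List.reverse_cons] using ih.append_zero
  | pair a ha _ ih =>
      simpa only [List.reverse_cons, List.append_assoc, List.cons_append, List.nil_append]
        using ih.append_pair ha

theorem admissible_reverse_iff {w : Word d} : Admissible d w.reverse ↔ Admissible d w :=
  ⟨fun h => by simpa only [List.reverse_reverse] using h.reverse, Admissible.reverse⟩

theorem Ebar_reverse (w : Word d) : Ebar d t w.reverse = Ebar d t w := by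
  unfold Ebar
  rw [admissible_reverse_iff]
  simp only [nc, zc, dc, List.count_reverse, List.length_reverse]

theorem Ebar_nil : Ebar d t [] = 1 := by
  simp [Ebar, Admissible.nil, nc, zc, dc]

theorem EbarL_single_nil (c : ℝ) : EbarL d t (Finsupp.single ([] : Word d) c) = c := by
  simp [EbarL, Ebar_nil]

theorem sh_single_nil_single_nil (a b : ℝ) :
    sh d (Finsupp.single [] a) (Finsupp.single [] b) = Finsupp.single [] (a * b) := by
  simp [sh, shuffleWord]

theorem wordLift_single (f : Word d → KA d) (w : Word d) :
    wordLift d f (Finsupp.single w 1) = f w := by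
  simp [wordLift]

theorem EE_single (w : Word d) (c : ℝ) :
    EE d t (Finsupp.single w c) = Finsupp.single [] (c * Ebar d t w) := by
  simp [EE, wordLift]

theorem EE_Sa_single (w : Word d) :
    EE d t (Sa d (Finsupp.single w 1)) = Finsupp.single [] ((-1) ^ w.length * Ebar d t w) := by
  rw [Sa, wordLift_single, EE_single, Ebar_reverse]

theorem EE_sinhlog_single (w : Word d) :
    (EE d t ∘ₗ ((1 / 2 : ℝ) • (idE d - Sa d))) (Finsupp.single w 1) =
      Finsupp.single [] (1 / 2 * (1 - (-1) ^ w.length) * Ebar d t w) := by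
  simp only [LinearMap.comp_apply, LinearMap.smul_apply, LinearMap.sub_apply, idE,
    LinearMap.id_apply, map_smul, map_sub, EE_single, EE_Sa_single, ← Finsupp.single_sub,
    Finsupp.smul_single, smul_eq_mul]
  ring_nf

theorem EE_coshlog_single (w : Word d) :
    (EE d t ∘ₗ ((1 / 2 : ℝ) • (idE d + Sa d))) (Finsupp.single w 1) =
      Finsupp.single [] (1 / 2 * (1 + (-1) ^ w.length) * Ebar d t w) := by
  simp only [LinearMap.comp_apply, LinearMap.smul_apply, LinearMap.add_apply, idE,
    LinearMap.id_apply, map_smul, map_add, EE_single, EE_Sa_single, ← Finsupp.single_add,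
    Finsupp.smul_single, smul_eq_mul]
  ring_nf

end Expectation

theorem one_sub_neg_one_pow_mul_one_add_neg_one_pow (n : ℕ) :
    (1 - (-1 : ℝ) ^ n) * (1 + (-1) ^ n) = 0 := by
  rcases neg_one_pow_eq_or ℝ n with h | h <;> rw [h] <;> norm_num

theorem stmt_15_general (d n : ℕ) (t : ℝ)
    {H : Type*} [NormedAddCommGroup H] [InnerProductSpace ℝ H]
    (Vf : Word d → H) :
    ip d t Vf n (EE d t ∘ₗ ((1 / 2 : ℝ) • (idE d - Sa d)))
                (EE d t ∘ₗ ((1 / 2 : ℝ) • (idE d + Sa d))) = 0 := by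
  refine Finset.sum_eq_zero fun u _ => Finset.sum_eq_zero fun v _ => ?_
  rw [EE_sinhlog_single, EE_coshlog_single, sh_single_nil_single_nil, EbarL_single_nil,
    List.length_ofFn, List.length_ofFn]
  calc _ = (1 - (-1 : ℝ) ^ n) * (1 + (-1) ^ n) * (Ebar d t (List.ofFn u) * Ebar d t (List.ofFn v)
        * inner ℝ (Vf (List.ofFn u)) (Vf (List.ofFn v)) / 4) := by ring
    _ = 0 := by rw [one_sub_neg_one_pow_mul_one_add_neg_one_pow, zero_mul]

theorem stmt_15 (d n : ℕ) (hd : 1 ≤ d) (hn : 1 ≤ n) (t : ℝ) (ht : 0 < t)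
    {H : Type*} [NormedAddCommGroup H] [InnerProductSpace ℝ H]
    (Vf : Word d → H) :
    ip d t Vf n (EE d t ∘ₗ ((1 / 2 : ℝ) • (idE d - Sa d)))
                (EE d t ∘ₗ ((1 / 2 : ℝ) • (idE d + Sa d))) = 0 :=
  stmt_15_general d n t Vf
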